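/- arXiv:1104.1906 — 2 statements merged into one kernel-verified Lean document; each statement's English description precedes it below -/
import Mathlib

section
/- For positive integers m_1, m_2 with m = lcm(m_1, m_2), and integers a_1, a_2 with |a_1 − a_2| = 1: (1/m)·Σ_{k=1}^{m} c_{m_1}(k−a_1)·c_{m_2}(k−a_2) equals (−1)^{ω(m)} if m_1 = m_2 = m and m is squarefree, and 0 otherwise; here ω(m) is the number of distinct prime factors of m. -/
/-!
Expanding both Ramanujan sums over divisors turns the sum into
`∑_{d₁ ∣ m₁, d₂ ∣ m₂} d₁ μ(m₁/d₁) d₂ μ(m₂/d₂) N(d₁, d₂)`, where `N(d₁, d₂)` counts the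
`k ∈ [1, m]` with `k ≡ a₁ (mod d₁)` and `k ≡ a₂ (mod d₂)`. As `a₁ - a₂ = ±1`, these congruences
are compatible only for coprime `d₁, d₂`, and then the Chinese remainder theorem gives
`N = m / (d₁ d₂)`. The remaining sum of `μ(m₁/d₁) μ(m₂/d₂)` over coprime pairs is evaluated by
detecting coprimality with `∑_{t ∣ gcd(d₁, d₂)} μ(t)`; it is `μ(m₁)` if `m₁ = m₂` and `0` otherwise.
-/

open Finset ArithmeticFunction

/-- The Ramanujan sum `c_n(k) = ∑_{d ∣ gcd(k,n)} d · μ(n/d)`, for integer `k`. -/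
def ramanujanSum (n : ℕ) (k : ℤ) : ℤ :=
  ∑ d ∈ (Int.gcd k n).divisors, (d : ℤ) * moebius (n / d)

open scoped ArithmeticFunction.Moebius

lemma ramanujanSum_eq_sum_divisors {n : ℕ} (hn : n ≠ 0) (k : ℤ) :
    ramanujanSum n k = ∑ d ∈ n.divisors, if (d : ℤ) ∣ k then (d : ℤ) * μ (n / d) else 0 := by
  rw [ramanujanSum, ← sum_filter]
  congr 1
  ext d
  simp only [Nat.mem_divisors, mem_filter, ← Int.natCast_dvd_natCast, Int.dvd_coe_gcd_iff,
    Ne, Int.gcd_eq_zero_iff, Int.natCast_eq_zero, hn, and_false, not_false_eq_true, and_true]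
  exact and_comm

lemma IsCoprime.exists_dvd_sub_and_dvd_sub_iff {d₁ d₂ : ℤ} (h : IsCoprime d₁ d₂) (a₁ a₂ : ℤ) :
    ∃ r, ∀ k, d₁ ∣ k - a₁ ∧ d₂ ∣ k - a₂ ↔ d₁ * d₂ ∣ k - r := by
  have ⟨u, v, huv⟩ := h
  set r := a₁ + u * d₁ * (a₂ - a₁)
  have h₁ : d₁ ∣ r - a₁ := ⟨u * (a₂ - a₁), by ring⟩
  have h₂ : d₂ ∣ r - a₂ := ⟨v * (a₁ - a₂), by linear_combination (a₂ - a₁) * huv⟩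
  refine ⟨r, fun k => ⟨fun ⟨hk₁, hk₂⟩ => h.mul_dvd ?_ ?_, fun hk => ⟨?_, ?_⟩⟩⟩
  · simpa using dvd_sub hk₁ h₁
  · simpa using dvd_sub hk₂ h₂
  · simpa using dvd_add ((dvd_mul_right d₁ d₂).trans hk) h₁
  · simpa using dvd_add ((dvd_mul_left d₂ d₁).trans hk) h₂

lemma card_filter_Icc_dvd_sub {D m : ℕ} (hDm : D ∣ m) (r : ℤ) :
    #{k ∈ Icc 1 m | (D : ℤ) ∣ (k : ℕ) - r} = m / D := by
  have hcast : #{k ∈ Icc 1 m | (D : ℤ) ∣ (k : ℕ) - r} = #{x ∈ Ioc (0 : ℤ) m | x ≡ r [ZMOD D]} := by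
    rw [← card_map (Nat.castEmbedding (R := ℤ))]
    congr 1
    ext x
    simp only [mem_map, mem_filter, mem_Icc, mem_Ioc, Nat.castEmbedding_apply, Int.modEq_comm,
      Int.modEq_iff_dvd]
    constructor
    · rintro ⟨k, ⟨hk, hkr⟩, rfl⟩
      exact ⟨by omega, hkr⟩
    · rintro ⟨hx, hxr⟩
      lift x to ℕ using by omega
      exact ⟨x, ⟨by omega, hxr⟩, rfl⟩
  obtain ⟨t, rfl⟩ := hDm
  obtain rfl | hD := D.eq_zero_or_pos
  · simp
  have hD' : (D : ℚ) ≠ 0 := by positivity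
  zify
  rw [hcast, Int.Ioc_filter_modEq_card _ _ (by exact_mod_cast hD)]
  push_cast
  rw [sub_div, mul_div_cancel_left₀ _ hD', zero_sub, neg_div, sub_eq_add_neg (t : ℚ),
    Int.floor_natCast_add]
  simp [hD.ne']

lemma card_filter_Icc_dvd_sub_and_dvd_sub {m d₁ d₂ : ℕ} (hd₁ : d₁ ∣ m) (hd₂ : d₂ ∣ m)
    {a₁ a₂ : ℤ} (ha : |a₁ - a₂| = 1) :
    #{k ∈ Icc 1 m | (d₁ : ℤ) ∣ (k : ℕ) - a₁ ∧ (d₂ : ℤ) ∣ (k : ℕ) - a₂} =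
      if d₁.Coprime d₂ then m / (d₁ * d₂) else 0 := by
  split_ifs with hd
  · obtain ⟨r, hr⟩ := (Nat.isCoprime_iff_coprime.mpr hd).exists_dvd_sub_and_dvd_sub_iff a₁ a₂
    simp_rw [hr, ← Nat.cast_mul]
    exact card_filter_Icc_dvd_sub (hd.mul_dvd_of_dvd_of_dvd hd₁ hd₂) r
  · refine card_eq_zero.mpr (filter_eq_empty_iff.mpr fun k _ ⟨hk₁, hk₂⟩ => hd ?_)
    have : ((d₁.gcd d₂ : ℕ) : ℤ) ∣ a₁ - a₂ := by
      simpa using dvd_sub ((Int.natCast_dvd_natCast.mpr (Nat.gcd_dvd_right d₁ d₂)).trans hk₂)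
        ((Int.natCast_dvd_natCast.mpr (Nat.gcd_dvd_left d₁ d₂)).trans hk₁)
    have hunit : (a₁ - a₂).natAbs = 1 := by rw [Int.abs_eq_natAbs] at ha; exact_mod_cast ha
    rw [← Int.natAbs_dvd_natAbs, Int.natAbs_natCast, hunit] at this
    exact Nat.dvd_one.mp this

lemma sum_divisors_moebius (n : ℕ) : ∑ d ∈ n.divisors, (μ d : ℤ) = if n = 1 then 1 else 0 := by
  rw [← coe_mul_zeta_apply, moebius_mul_coe_zeta, one_apply]

lemma sum_divisors_filter_dvd_moebius_div {n : ℕ} (hn : n ≠ 0) (t : ℕ) :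
    ∑ d ∈ n.divisors with t ∣ d, (μ (n / d) : ℤ) = if n = t then 1 else 0 := by
  by_cases ht : t ∣ n
  · obtain ⟨s, rfl⟩ := ht
    have ht0 : 0 < t := Nat.pos_of_ne_zero (left_ne_zero_of_mul hn)
    have hs0 : s ≠ 0 := right_ne_zero_of_mul hn
    have : {d ∈ (t * s).divisors | t ∣ d} = s.divisors.image (t * ·) := by
      ext d
      simp only [mem_filter, Nat.mem_divisors, mem_image]
      constructor
      · rintro ⟨⟨hd, -⟩, e, rfl⟩
        exact ⟨e, ⟨Nat.dvd_of_mul_dvd_mul_left ht0 hd, hs0⟩, rfl⟩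
      · rintro ⟨e, ⟨he, -⟩, rfl⟩
        exact ⟨⟨Nat.mul_dvd_mul_left t he, hn⟩, dvd_mul_right t e⟩
    rw [this, sum_image fun _ _ _ _ h => Nat.eq_of_mul_eq_mul_left ht0 h]
    simp only [Nat.mul_div_mul_left _ _ ht0]
    rw [Nat.sum_div_divisors s (fun e => (μ e : ℤ)), sum_divisors_moebius]
    simp [ht0.ne']
  · rw [sum_eq_zero, if_neg (by rintro rfl; exact ht dvd_rfl)]
    intro d hd
    obtain ⟨hdn, htd⟩ := mem_filter.mp hd
    exact absurd (htd.trans (Nat.dvd_of_mem_divisors hdn)) ht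

lemma ite_coprime_eq_sum_moebius {n d₁ d₂ : ℕ} (hn : n ≠ 0) (hd₁ : d₁ ∣ n) :
    (if d₁.Coprime d₂ then 1 else 0 : ℤ) = ∑ t ∈ n.divisors with t ∣ d₁ ∧ t ∣ d₂, (μ t : ℤ) := by
  have : {t ∈ n.divisors | t ∣ d₁ ∧ t ∣ d₂} = (d₁.gcd d₂).divisors := by
    simp_rw [← Nat.dvd_gcd_iff]
    exact Nat.divisors_filter_dvd_of_dvd hn ((Nat.gcd_dvd_left _ _).trans hd₁)
  rw [this, sum_divisors_moebius]

lemma sum_divisors_sum_divisors_coprime_moebius {m₁ m₂ : ℕ} (hm₁ : m₁ ≠ 0) (hm₂ : m₂ ≠ 0) :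
    ∑ d₁ ∈ m₁.divisors, ∑ d₂ ∈ m₂.divisors,
      (if d₁.Coprime d₂ then μ (m₁ / d₁) * μ (m₂ / d₂) else 0 : ℤ) =
    if m₁ = m₂ then μ m₁ else 0 := by
  calc _ = ∑ d₁ ∈ m₁.divisors, ∑ d₂ ∈ m₂.divisors, ∑ t ∈ m₁.divisors,
        if t ∣ d₁ ∧ t ∣ d₂ then μ t * (μ (m₁ / d₁) * μ (m₂ / d₂)) else (0 : ℤ) := by
        refine sum_congr rfl fun d₁ hd₁ => sum_congr rfl fun d₂ _ => ?_
        rw [← boole_mul, ite_coprime_eq_sum_moebius hm₁ (Nat.dvd_of_mem_divisors hd₁), sum_mul,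
          sum_filter]
    _ = ∑ t ∈ m₁.divisors, μ t * ((∑ d₁ ∈ m₁.divisors with t ∣ d₁, (μ (m₁ / d₁) : ℤ)) *
          ∑ d₂ ∈ m₂.divisors with t ∣ d₂, (μ (m₂ / d₂) : ℤ)) := by
        simp_rw [sum_filter, sum_mul_sum, mul_sum, ite_zero_mul_ite_zero]
        symm
        rw [sum_comm]
        refine sum_congr rfl fun d₁ _ => ?_
        rw [sum_comm]
        refine sum_congr rfl fun d₂ _ => sum_congr rfl fun t _ => ?_
        split_ifs <;> ring
    _ = ∑ t ∈ m₁.divisors, if t = m₁ then (if m₁ = m₂ then μ m₁ else 0) else 0 := by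
        refine sum_congr rfl fun t _ => ?_
        rw [sum_divisors_filter_dvd_moebius_div hm₁, sum_divisors_filter_dvd_moebius_div hm₂]
        by_cases h : t = m₁ <;> by_cases h' : m₁ = m₂ <;> simp_all [eq_comm]
    _ = _ := by rw [sum_ite_eq' m₁.divisors, if_pos (Nat.mem_divisors_self _ hm₁)]

theorem sum_ramanujanSum_mul_ramanujanSum {m₁ m₂ : ℕ} (hm₁ : m₁ ≠ 0) (hm₂ : m₂ ≠ 0)
    {a₁ a₂ : ℤ} (ha : |a₁ - a₂| = 1) :
    ∑ k ∈ Icc 1 (m₁.lcm m₂), ramanujanSum m₁ (k - a₁) * ramanujanSum m₂ (k - a₂) =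
      m₁.lcm m₂ * if m₁ = m₂ then μ m₁ else 0 := by
  set m := m₁.lcm m₂
  calc _ = ∑ d₁ ∈ m₁.divisors, ∑ d₂ ∈ m₂.divisors,
        #{k ∈ Icc 1 m | (d₁ : ℤ) ∣ (k : ℕ) - a₁ ∧ (d₂ : ℤ) ∣ (k : ℕ) - a₂} *
          ((d₁ * μ (m₁ / d₁)) * (d₂ * μ (m₂ / d₂))) := by
        simp_rw [ramanujanSum_eq_sum_divisors hm₁, ramanujanSum_eq_sum_divisors hm₂, sum_mul_sum,
          ite_zero_mul_ite_zero]
        rw [sum_comm]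
        refine sum_congr rfl fun d₁ _ => ?_
        rw [sum_comm]
        refine sum_congr rfl fun d₂ _ => ?_
        rw [← sum_filter, sum_const, nsmul_eq_mul]
    _ = ∑ d₁ ∈ m₁.divisors, ∑ d₂ ∈ m₂.divisors,
        m * if d₁.Coprime d₂ then μ (m₁ / d₁) * μ (m₂ / d₂) else 0 := by
        refine sum_congr rfl fun d₁ hd₁ => sum_congr rfl fun d₂ hd₂ => ?_
        have hd₁m : d₁ ∣ m := (Nat.dvd_of_mem_divisors hd₁).trans (Nat.dvd_lcm_left m₁ m₂)
        have hd₂m : d₂ ∣ m := (Nat.dvd_of_mem_divisors hd₂).trans (Nat.dvd_lcm_right m₁ m₂)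
        rw [card_filter_Icc_dvd_sub_and_dvd_sub hd₁m hd₂m ha]
        split_ifs with hd
        · have : ((m / (d₁ * d₂) : ℕ) : ℤ) * (d₁ * d₂) = m := by
            exact_mod_cast Nat.div_mul_cancel (hd.mul_dvd_of_dvd_of_dvd hd₁m hd₂m)
          linear_combination μ (m₁ / d₁) * μ (m₂ / d₂) * this
        · simp
    _ = _ := by simp_rw [← mul_sum, sum_divisors_sum_divisors_coprime_moebius hm₁ hm₂]

lemma moebius_eq_neg_one_pow_card_primeFactors {n : ℕ} (hn : Squarefree n) :
    μ n = (-1) ^ n.primeFactors.card := by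
  rw [moebius_apply_of_squarefree hn,
    ← (cardDistinctFactors_eq_cardFactors_iff_squarefree hn.ne_zero).mpr hn,
    cardDistinctFactors_apply, ← List.card_toFinset, Nat.toFinset_factors]

theorem eval_E_a1_a2 (m₁ m₂ : ℕ) (hm₁ : 0 < m₁) (hm₂ : 0 < m₂)
    (a₁ a₂ : ℤ) (ha : |a₁ - a₂| = 1) :
    (1 / (Nat.lcm m₁ m₂ : ℚ)) *
      ∑ k ∈ Icc 1 (Nat.lcm m₁ m₂),
        (ramanujanSum m₁ ((k : ℤ) - a₁) : ℚ) * (ramanujanSum m₂ ((k : ℤ) - a₂) : ℚ) =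
    if m₁ = m₂ ∧ Squarefree (Nat.lcm m₁ m₂) then
      (-1 : ℚ) ^ (Nat.lcm m₁ m₂).primeFactors.card
    else 0 := by
  have hm : (m₁.lcm m₂ : ℚ) ≠ 0 := by exact_mod_cast (Nat.lcm_pos hm₁ hm₂).ne'
  have hsum := congrArg (Int.cast : ℤ → ℚ)
    (sum_ramanujanSum_mul_ramanujanSum hm₁.ne' hm₂.ne' ha)
  push_cast at hsum
  rw [hsum, one_div, inv_mul_cancel_left₀ hm]
  by_cases h : m₁ = m₂
  · subst h
    rw [Nat.lcm_self]
    by_cases hsf : Squarefree m₁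
    · simp [hsf, moebius_eq_neg_one_pow_card_primeFactors hsf]
    · simp [hsf, moebius_eq_zero_of_not_squarefree hsf]
  · simp [h]
end

section
/- Let g_1,…,g_r be integer polynomials and m = lcm(m_1,…,m_r). Then Σ_{1 ≤ k ≤ m, gcd(k,m)=1} c_{m_1}(g_1(k))···c_{m_r}(g_r(k)) = φ(m)·Σ_{d_1|m_1,…,d_r|m_r} [d_1 μ(m_1/d_1)···d_r μ(m_r/d_r)/φ(lcm(d_1,…,d_r))]·η_G(d_1,…,d_r), where η_G(d_1,…,d_r) counts x mod lcm(d_1,…,d_r) with g_i(x) ≡ 0 (mod d_i) and gcd(x, d_i) = 1 for all i. -/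
open Finset ArithmeticFunction

/-- `η_G(d₁,…,d_r)`: the number of `x` mod `lcm(d₁,…,d_r)` with `gᵢ(x) ≡ 0 (mod dᵢ)`
and `gcd(x, dᵢ) = 1` for all `i`. -/
def etaG {r : ℕ} (g : Fin r → Polynomial ℤ) (d : Fin r → ℕ) : ℕ :=
  ((Finset.range (Finset.univ.lcm d)).filter
    (fun x : ℕ => ∀ i, (d i : ℤ) ∣ (g i).eval (x : ℤ) ∧ Nat.gcd x (d i) = 1)).card

/-!
Writing `c_n(a) = ∑_{d ∣ n, d ∣ a} d μ(n/d)` and multiplying out, the left-hand side becomes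
`∑_d (∏ dᵢ μ(mᵢ/dᵢ)) · N(d)`, where `N(d)` counts the units `k` mod `m` with `dᵢ ∣ gᵢ(k)` for
all `i`. These conditions only depend on `k` mod `L = lcm dᵢ`, and reduction
`(ℤ/m)ˣ → (ℤ/L)ˣ` is a surjective homomorphism, so all its fibres have `φ(m)/φ(L)` elements
and `N(d) = φ(m) η_G(d) / φ(L)`.
-/

theorem Polynomial.dvd_eval_iff_of_modEq (p : Polynomial ℤ) {n a b : ℤ} (h : a ≡ b [ZMOD n]) :
    n ∣ p.eval a ↔ n ∣ p.eval b :=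
  dvd_iff_dvd_of_dvd_sub (h.symm.dvd.trans (Polynomial.sub_dvd_eval_sub a b p))

theorem Nat.coprime_finset_lcm_iff {ι : Type*} (s : Finset ι) (f : ι → ℕ) (x : ℕ) :
    x.Coprime (s.lcm f) ↔ ∀ i ∈ s, x.Coprime (f i) :=
  ⟨fun h _ hi => h.coprime_dvd_right (dvd_lcm hi), fun h =>
    (Nat.Coprime.prod_right h).coprime_dvd_right (Finset.lcm_dvd fun _ hi => dvd_prod_of_mem f hi)⟩

theorem ramanujanSum_eq_sum_divisors_ite {n : ℕ} (hn : n ≠ 0) (k : ℤ) :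
    ramanujanSum n k =
      ∑ d ∈ n.divisors, if (d : ℤ) ∣ k then (d : ℤ) * moebius (n / d) else 0 := by
  rw [ramanujanSum, ← sum_filter,
    ← Nat.divisors_filter_dvd_of_dvd hn (Int.ofNat_dvd.mp (Int.gcd_dvd_right k n))]
  congr 1
  ext d
  simp only [mem_filter, Nat.mem_divisors, Int.dvd_gcd_iff, Int.natCast_dvd_natCast]
  tauto

theorem prod_ramanujanSum_eq_sum_piFinset {ι : Type*} [Fintype ι] [DecidableEq ι]
    (m : ι → ℕ) (hm : ∀ i, m i ≠ 0) (a : ι → ℤ)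
    [DecidablePred fun d : ι → ℕ => ∀ i, (d i : ℤ) ∣ a i] :
    ∏ i, (ramanujanSum (m i) (a i) : ℚ) =
      ∑ d ∈ Fintype.piFinset (fun i => (m i).divisors),
        if ∀ i, (d i : ℤ) ∣ a i then ∏ i, (d i : ℚ) * (moebius (m i / d i) : ℚ) else 0 := by
  simp_rw [ramanujanSum_eq_sum_divisors_ite (hm _)]
  push_cast
  rw [prod_univ_sum]
  refine sum_congr rfl fun d _ => ?_
  rw [Fintype.prod_ite_zero]
  -- `Fintype.prod_ite_zero` decides `∀ i, _` by `Fintype.decidableForallFintype`, which need not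
  -- be the instance found at the use site (for `Fin r` it is `Nat.decidableForallFin`).
  congr

theorem MonoidHom.card_mul_card_filter_comp_of_surjective {G H : Type*} [Group G] [Monoid H]
    [Fintype G] [Fintype H] [DecidableEq H] {f : G →* H} (hf : Function.Surjective f)
    (P : H → Prop) [DecidablePred P] :
    Fintype.card H * #{g | P (f g)} = Fintype.card G * #{h | P h} := by
  set c := #{g | f g = 1}
  have hfiber (h : H) : #{g | f g = h} = c := card_fiber_eq_of_mem_range f (hf h) (hf 1)
  have hG : Fintype.card G = Fintype.card H * c := by
    rw [← card_univ, card_eq_sum_card_fiberwise (f := f) (t := univ) fun _ _ => mem_univ _]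
    simp [hfiber]
  have hP : #{g | P (f g)} = #{h | P h} * c := by
    rw [card_eq_sum_card_fiberwise (f := f) (t := {h | P h}) fun g hg => by simpa using hg,
      sum_congr rfl fun h hh => ?_, sum_const, smul_eq_mul]
    rw [filter_filter, ← hfiber h]
    congr 1
    ext g
    simp only [mem_filter, mem_univ, true_and] at hh ⊢
    exact ⟨And.right, fun hg => ⟨hg ▸ hh, hg⟩⟩
  rw [hP, hG]
  ring

theorem ZMod.totient_mul_card_filter_unitsMap {L M : ℕ} [NeZero L] [NeZero M] (hLM : L ∣ M)
    (P : (ZMod L)ˣ → Prop) [DecidablePred P] :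
    L.totient * #{u : (ZMod M)ˣ | P (ZMod.unitsMap hLM u)} = M.totient * #{v | P v} := by
  rw [← ZMod.card_units_eq_totient, ← ZMod.card_units_eq_totient]
  exact MonoidHom.card_mul_card_filter_comp_of_surjective (ZMod.unitsMap_surjective hLM) P

theorem ZMod.card_units_filter_val (n : ℕ) [NeZero n] (Q : ℕ → Prop) [DecidablePred Q] :
    #{u : (ZMod n)ˣ | Q (u : ZMod n).val} = #{k ∈ range n | k.Coprime n ∧ Q k} := by
  refine card_bij (fun u _ => (u : ZMod n).val) ?_ ?_ ?_
  · intro u hu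
    simp only [mem_filter, mem_univ, true_and, mem_range] at hu ⊢
    exact ⟨ZMod.val_lt _, ZMod.val_coe_unit_coprime u, hu⟩
  · intro u _ v _ huv
    exact Units.ext (ZMod.val_injective n huv)
  · intro k hk
    simp only [mem_filter, mem_range] at hk
    obtain ⟨hkn, hcop, hQ⟩ := hk
    refine ⟨ZMod.unitOfCoprime k hcop, ?_, ?_⟩ <;>
      simp [ZMod.coe_unitOfCoprime, ZMod.val_cast_of_lt hkn, hQ]

theorem Function.Periodic.card_filter_Icc_one_eq_card_filter_range {n : ℕ} {Q : ℕ → Prop}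
    [DecidablePred Q] (hQ : Function.Periodic Q n) :
    #{k ∈ Icc 1 n | Q k} = #{k ∈ range n | Q k} := by
  rw [← Ico_add_one_right_eq_Icc, add_comm, Nat.filter_Ico_card_eq_of_periodic 1 n Q hQ,
    Nat.count_eq_card_filter_range]

theorem totient_mul_card_filter_coprime_Icc {L M : ℕ} (hLM : L ∣ M) (hM : M ≠ 0)
    (Q : ℕ → Prop) [DecidablePred Q] (hQ : ∀ a b, a ≡ b [MOD L] → (Q a ↔ Q b)) :
    L.totient * #{k ∈ Icc 1 M | k.Coprime M ∧ Q k} =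
      M.totient * #{x ∈ range L | x.Coprime L ∧ Q x} := by
  have : NeZero M := ⟨hM⟩
  have : NeZero L := ⟨ne_zero_of_dvd_ne_zero hM hLM⟩
  have hper : Function.Periodic (fun k => k.Coprime M ∧ Q k) M := fun k =>
    propext <| and_congr Nat.coprime_add_self_left <| by
      simpa using hQ _ _ ((Nat.modEq_zero_iff_dvd.mpr hLM).add_left k)
  rw [hper.card_filter_Icc_one_eq_card_filter_range, ← ZMod.card_units_filter_val,
    ← ZMod.card_units_filter_val, ← ZMod.totient_mul_card_filter_unitsMap hLM]
  congr 2
  ext u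
  simp only [mem_filter, mem_univ, true_and]
  rw [ZMod.unitsMap_val, ZMod.cast_eq_val, ZMod.val_natCast]
  exact hQ _ _ (Nat.mod_modEq _ L).symm

theorem etaG_eq_card_filter_coprime {r : ℕ} (g : Fin r → Polynomial ℤ) (d : Fin r → ℕ) :
    etaG g d = ((range (univ.lcm d)).filter fun x : ℕ =>
      x.Coprime (univ.lcm d) ∧ ∀ i, (d i : ℤ) ∣ (g i).eval (x : ℤ)).card := by
  simp only [etaG, Nat.coprime_finset_lcm_iff, mem_univ, true_implies, forall_and,
    Nat.coprime_iff_gcd_eq_one, and_comm]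

theorem totient_lcm_mul_card_filter_dvd_eval {r : ℕ} (g : Fin r → Polynomial ℤ)
    (d : Fin r → ℕ) {M : ℕ} (hM : M ≠ 0) (hdM : ∀ i, d i ∣ M) :
    (univ.lcm d).totient *
        #{k ∈ Icc 1 M | Nat.gcd k M = 1 ∧ ∀ i, (d i : ℤ) ∣ (g i).eval (k : ℤ)} =
      M.totient * etaG g d := by
  have hQ (a b : ℕ) (hab : a ≡ b [MOD univ.lcm d]) :
      (∀ i, (d i : ℤ) ∣ (g i).eval (a : ℤ)) ↔ ∀ i, (d i : ℤ) ∣ (g i).eval (b : ℤ) :=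
    forall_congr' fun i => Polynomial.dvd_eval_iff_of_modEq _
      (Int.natCast_modEq_iff.mpr (hab.of_dvd (dvd_lcm (mem_univ i))))
  rw [etaG_eq_card_filter_coprime,
    ← totient_mul_card_filter_coprime_Icc (Finset.lcm_dvd fun i _ => hdM i) hM _ hQ]

theorem eval_R_G {r : ℕ} (g : Fin r → Polynomial ℤ) (m : Fin r → ℕ)
    (hm : ∀ i, 0 < m i) :
    ∑ k ∈ (Icc 1 (Finset.univ.lcm m)).filter
        (fun k => Nat.gcd k (Finset.univ.lcm m) = 1),
      ∏ i, (ramanujanSum (m i) ((g i).eval (k : ℤ)) : ℚ) =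
    (Nat.totient (Finset.univ.lcm m) : ℚ) *
      ∑ d ∈ Fintype.piFinset (fun i => (m i).divisors),
        (∏ i, (d i : ℚ) * (moebius (m i / d i) : ℚ)) /
            (Nat.totient (Finset.univ.lcm d) : ℚ) * (etaG g d : ℚ) := by
  have hM : univ.lcm m ≠ 0 := by simp [Finset.lcm_eq_zero_iff, (hm _).ne']
  simp_rw [prod_ramanujanSum_eq_sum_piFinset m fun i => (hm i).ne']
  rw [sum_comm, mul_sum]
  refine sum_congr rfl fun d hd => ?_
  have hdm (i : Fin r) : d i ∣ m i := Nat.dvd_of_mem_divisors (Fintype.mem_piFinset.mp hd i)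
  have hL : ((univ.lcm d).totient : ℚ) ≠ 0 := by
    have hd0 (i : Fin r) : d i ≠ 0 := ne_zero_of_dvd_ne_zero (hm i).ne' (hdm i)
    simp [Finset.lcm_eq_zero_iff, hd0]
  have hcount := congrArg (Nat.cast : ℕ → ℚ) <|
    totient_lcm_mul_card_filter_dvd_eval g d hM fun i => (hdm i).trans (dvd_lcm (mem_univ i))
  push_cast at hcount
  rw [← sum_filter, sum_const, filter_filter, nsmul_eq_mul]
  field_simp
  linear_combination (∏ i, (d i : ℚ) * (moebius (m i / d i) : ℚ)) * hcount
end
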